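/- (Smyth) Let n ≥ 1 and p ≥ 1. If |p − 2| < 2·log(1 + 2/n)/log(n+2), then the largest cardinality of an equilateral set in ℓ_p^n is exactly n+1, i.e. e(ℓ_p^n) = n+1. -/

import Mathlib

open Finset

/-- The p-norm on `ℝ^n`. -/
noncomputable def pnorm (p : ℝ) {n : ℕ} (x : Fin n → ℝ) : ℝ :=
  (∑ i, |x i| ^ p) ^ (1 / p)

/-- A set `S ⊆ ℝ^n` is equilateral with respect to the p-norm if there is `λ > 0`
with `‖x - y‖_p = λ` for all distinct `x, y ∈ S`. -/
def IsEquilateral (p : ℝ) {n : ℕ} (S : Set (Fin n → ℝ)) : Prop :=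
  ∃ lam > 0, ∀ x ∈ S, ∀ y ∈ S, x ≠ y → pnorm p (x - y) = lam

/-!
The lower bound is the simplex formed by the standard basis vectors `eᵢ` and a diagonal point
`(c, …, c)`, where `c` solves `|1 - c|ᵖ + (n - 1)|c|ᵖ = 2` (intermediate value theorem).

For the upper bound, `‖·‖₂` and `‖·‖ₚ` on `ℝⁿ` agree up to a factor `n ^ |1/p - 1/2|`, so the
squared Euclidean distances within an equilateral set of `ℓₚⁿ` lie in an interval `[a, b]` with
`b / a ≤ n ^ (|p - 2| / p) < (n + 2) / n`; the last inequality is the hypothesis on `p`.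
Any `n + 2` points `xᵢ` of `ℝⁿ` are affinely dependent: `∑ vᵢ xᵢ = 0` and `∑ vᵢ = 0` with
`v ≠ 0`, which makes `∑ᵢⱼ vᵢ vⱼ ‖xᵢ - xⱼ‖²` vanish. Bounding that form through `a`, `b` and
`(∑ |vᵢ|)² ≤ (n + 2) ∑ vᵢ²` gives `a (n + 2) ≤ b n`, a contradiction.
-/

section Sums

variable {ι : Type*}

theorem sum_rpow_le_rpow_sum (s : Finset ι) {f : ι → ℝ} (hf : ∀ i ∈ s, 0 ≤ f i) {r : ℝ}
    (hr : 1 ≤ r) : ∑ i ∈ s, f i ^ r ≤ (∑ i ∈ s, f i) ^ r := by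
  have split : ∀ x : ℝ, 0 ≤ x → x ^ r = x ^ (r - 1) * x := fun x hx => by
    rw [← Real.rpow_add_one' hx (by linarith), sub_add_cancel]
  calc ∑ i ∈ s, f i ^ r = ∑ i ∈ s, f i ^ (r - 1) * f i :=
        sum_congr rfl fun i hi => split _ (hf i hi)
    _ ≤ ∑ i ∈ s, (∑ j ∈ s, f j) ^ (r - 1) * f i := sum_le_sum fun i hi =>
        mul_le_mul_of_nonneg_right
          (Real.rpow_le_rpow (hf i hi) (single_le_sum hf hi) (by linarith)) (hf i hi)
    _ = (∑ i ∈ s, f i) ^ r := by rw [← mul_sum, split _ (sum_nonneg hf)]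

theorem sum_sum_mul_mul_le {s : Finset ι} {v : ι → ℝ} {D : ι → ι → ℝ} {a b : ℝ}
    (hv : ∑ i ∈ s, v i = 0) (hD : ∀ i ∈ s, D i i = 0)
    (hDab : ∀ i ∈ s, ∀ j ∈ s, i ≠ j → a ≤ D i j ∧ D i j ≤ b) :
    ∑ i ∈ s, ∑ j ∈ s, v i * v j * D i j ≤
      (b - a) / 2 * (∑ i ∈ s, |v i|) ^ 2 - b * ∑ i ∈ s, v i ^ 2 := by
  classical
  -- off the diagonal, `x Dᵢⱼ ≤ b x⁺ - a x⁻ = ((b - a) |x| + (b + a) x) / 2` for `x = vᵢ vⱼ`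
  have term : ∀ i ∈ s, ∀ j ∈ s, v i * v j * D i j ≤ (b - a) / 2 * (|v i| * |v j|) +
      (b + a) / 2 * (v i * v j) - if i = j then b * v i ^ 2 else 0 := by
    intro i hi j hj
    rcases eq_or_ne i j with rfl | hij
    · rw [hD i hi, if_pos rfl, abs_mul_abs_self]; exact le_of_eq (by ring)
    · obtain ⟨hai, hbi⟩ := hDab i hi j hj hij
      rw [if_neg hij, sub_zero, ← abs_mul]
      rcases le_total 0 (v i * v j) with h | h
      · rw [abs_of_nonneg h]; nlinarith
      · rw [abs_of_nonpos h]; nlinarith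
  refine (sum_le_sum fun i hi => sum_le_sum fun j hj => term i hi j hj).trans_eq ?_
  simp only [sum_sub_distrib, sum_add_distrib, ← mul_sum, ← sum_mul, sum_ite_eq, hv]
  rw [sum_congr rfl fun i hi => if_pos hi, ← mul_sum]
  ring

end Sums

section InnerProductSpace

variable {E : Type*} [NormedAddCommGroup E] [InnerProductSpace ℝ E]

theorem sum_sum_mul_mul_norm_sub_sq_eq_zero {T : Finset E} {v : E → ℝ}
    (hv : ∑ x ∈ T, v x = 0) (hvx : ∑ x ∈ T, v x • x = 0) :
    ∑ x ∈ T, ∑ y ∈ T, v x * v y * ‖x - y‖ ^ 2 = 0 := by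
  have expand : ∀ x y : E, v x * v y * ‖x - y‖ ^ 2 =
      v y * (v x * ‖x‖ ^ 2) - 2 * v x * inner ℝ x (v y • y) + v x * (v y * ‖y‖ ^ 2) := by
    intro x y
    rw [norm_sub_sq_real, real_inner_smul_right]
    ring
  simp only [expand, sum_add_distrib, sum_sub_distrib, ← mul_sum, ← sum_mul, ← inner_sum, hvx,
    hv, inner_zero_right]
  simp

theorem mul_finrank_add_two_le_mul_finrank [FiniteDimensional ℝ E] {T : Finset E}
    (hT : #T = Module.finrank ℝ E + 2) {a b : ℝ}
    (hab : ∀ x ∈ T, ∀ y ∈ T, x ≠ y → a ≤ ‖x - y‖ ^ 2 ∧ ‖x - y‖ ^ 2 ≤ b) :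
    a * (Module.finrank ℝ E + 2) ≤ b * Module.finrank ℝ E := by
  obtain ⟨v, hrel, hv, x₀, hx₀, hv₀⟩ :=
    Module.exists_nontrivial_relation_sum_zero_of_finrank_succ_lt_card (R := ℝ) (t := T)
      (by omega)
  obtain ⟨x, hx, y, hy, hxy⟩ := one_lt_card.mp (by omega : 1 < #T)
  have hle : a ≤ b := (hab x hx y hy hxy).1.trans (hab x hx y hy hxy).2
  have hq : 0 < ∑ x ∈ T, v x ^ 2 :=
    (sq_pos_of_ne_zero hv₀).trans_le (single_le_sum (fun x _ => sq_nonneg (v x)) hx₀)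
  have hCS : (∑ x ∈ T, |v x|) ^ 2 ≤ (Module.finrank ℝ E + 2) * ∑ x ∈ T, v x ^ 2 := by
    have := sq_sum_le_card_mul_sum_sq (s := T) (f := fun x => |v x|)
    simpa only [sq_abs, hT, Nat.cast_add, Nat.cast_ofNat] using this
  have hform := sum_sum_mul_mul_le (D := fun x y => ‖x - y‖ ^ 2) hv (by simp) hab
  rw [sum_sum_mul_mul_norm_sub_sq_eq_zero hv hrel] at hform
  nlinarith [mul_le_mul_of_nonneg_left hCS (sub_nonneg.2 hle)]

end InnerProductSpace

section PNorm

variable {n : ℕ}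

theorem pnorm_nonneg (p : ℝ) (x : Fin n → ℝ) : 0 ≤ pnorm p x :=
  Real.rpow_nonneg (sum_nonneg fun _ _ => Real.rpow_nonneg (abs_nonneg _) _) _

theorem norm_toLp_two (x : Fin n → ℝ) :
    ‖(WithLp.toLp 2 x : EuclideanSpace ℝ (Fin n))‖ = pnorm 2 x := by
  rw [PiLp.norm_eq_sum (by simp), pnorm]
  simp

theorem sum_abs_rpow_eq_sum_rpow_div {p : ℝ} (hp : 0 < p) (q : ℝ) (x : Fin n → ℝ) :
    ∑ k, |x k| ^ q = ∑ k, (|x k| ^ p) ^ (q / p) := by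
  simp only [← Real.rpow_mul (abs_nonneg _), mul_div_cancel₀ _ hp.ne']

theorem pnorm_le_pnorm_of_le {p q : ℝ} (hp : 0 < p) (hpq : p ≤ q) (x : Fin n → ℝ) :
    pnorm q x ≤ pnorm p x := by
  have hq : 0 < q := hp.trans_le hpq
  have hsum : 0 ≤ ∑ k, |x k| ^ p := sum_nonneg fun k _ => Real.rpow_nonneg (abs_nonneg _) _
  calc pnorm q x = (∑ k, (|x k| ^ p) ^ (q / p)) ^ (1 / q) := by
        rw [pnorm, sum_abs_rpow_eq_sum_rpow_div hp]
    _ ≤ ((∑ k, |x k| ^ p) ^ (q / p)) ^ (1 / q) :=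
        Real.rpow_le_rpow (sum_nonneg fun k _ => by positivity)
          (sum_rpow_le_rpow_sum _ (fun k _ => by positivity) ((one_le_div hp).2 hpq))
          (by positivity)
    _ = pnorm p x := by
        rw [← Real.rpow_mul hsum, pnorm]
        congr 1
        field_simp

theorem pnorm_le_rpow_mul_pnorm {p q : ℝ} (hp : 0 < p) (hpq : p ≤ q) (x : Fin n → ℝ) :
    pnorm p x ≤ (n : ℝ) ^ (1 / p - 1 / q) * pnorm q x := by
  have hq : 0 < q := hp.trans_le hpq
  have hsum : 0 ≤ ∑ k, |x k| ^ p := sum_nonneg fun k _ => Real.rpow_nonneg (abs_nonneg _) _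
  calc pnorm p x = ((∑ k, |x k| ^ p) ^ (q / p)) ^ (1 / q) := by
        rw [← Real.rpow_mul hsum, pnorm]
        congr 1
        field_simp
    _ ≤ ((n : ℝ) ^ (q / p - 1) * ∑ k, (|x k| ^ p) ^ (q / p)) ^ (1 / q) := by
        refine Real.rpow_le_rpow (by positivity) ?_ (by positivity)
        simpa using Real.rpow_sum_le_const_mul_sum_rpow_of_nonneg univ ((one_le_div hp).2 hpq)
          (fun k _ => Real.rpow_nonneg (abs_nonneg (x k)) p)
    _ = (n : ℝ) ^ (1 / p - 1 / q) * pnorm q x := by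
        rw [Real.mul_rpow (by positivity) (sum_nonneg fun k _ => by positivity),
          ← Real.rpow_mul (Nat.cast_nonneg n), pnorm, sum_abs_rpow_eq_sum_rpow_div hp]
        congr 2
        field_simp

theorem exists_mul_pnorm_le_pnorm_two (hn : 0 < n) {p : ℝ} (hp : 0 < p) :
    ∃ c > 0, ∀ x : Fin n → ℝ,
      c * pnorm p x ≤ pnorm 2 x ∧ pnorm 2 x ≤ (n : ℝ) ^ |1 / p - 1 / 2| * (c * pnorm p x) := by
  have hn' : (0 : ℝ) < n := Nat.cast_pos.2 hn
  rcases le_total p 2 with hp2 | hp2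
  · have hexp : 0 ≤ 1 / p - 1 / 2 := sub_nonneg.2 (one_div_le_one_div_of_le hp hp2)
    refine ⟨((n : ℝ) ^ (1 / p - 1 / 2))⁻¹, by positivity, fun x => ⟨?_, ?_⟩⟩
    · rw [inv_mul_le_iff₀ (by positivity)]
      exact pnorm_le_rpow_mul_pnorm hp hp2 x
    · rw [abs_of_nonneg hexp, mul_inv_cancel_left₀ (by positivity)]
      exact pnorm_le_pnorm_of_le hp hp2 x
  · have hexp : 1 / p - 1 / 2 ≤ 0 := sub_nonpos.2 (one_div_le_one_div_of_le two_pos hp2)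
    refine ⟨1, one_pos, fun x => ⟨?_, ?_⟩⟩
    · rw [one_mul]
      exact pnorm_le_pnorm_of_le two_pos hp2 x
    · rw [one_mul, abs_of_nonpos hexp, neg_sub]
      exact pnorm_le_rpow_mul_pnorm two_pos hp2 x

end PNorm

theorem rpow_abs_sq_mul_lt_add_two {x p : ℝ} (hx : 0 < x) (hp : 0 < p)
    (h : |p - 2| < 2 * Real.log (1 + 2 / x) / Real.log (x + 2)) :
    (x ^ |1 / p - 1 / 2|) ^ 2 * x < x + 2 := by
  have hL : 0 < Real.log (x + 2) := Real.log_pos (by linarith)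
  have hℓ : 0 < Real.log (1 + 2 / x) := Real.log_pos (by have := div_pos two_pos hx; linarith)
  have hlog : Real.log x = Real.log (x + 2) - Real.log (1 + 2 / x) := by
    rw [show 1 + 2 / x = (x + 2) / x by field_simp, Real.log_div (by positivity) hx.ne']
    ring
  have hsq : (x ^ |1 / p - 1 / 2|) ^ 2 = x ^ (|p - 2| / p) := by
    rw [← Real.rpow_natCast, ← Real.rpow_mul hx.le,
      show 1 / p - 1 / 2 = (2 - p) / (2 * p) by field_simp, abs_div, abs_sub_comm,
      abs_of_pos (by positivity : 0 < 2 * p)]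
    congr 1
    push_cast
    field_simp
  have h' : |p - 2| * Real.log (x + 2) < 2 * Real.log (1 + 2 / x) := (lt_div_iff₀ hL).1 h
  have hexp : |p - 2| / p * Real.log x < Real.log (1 + 2 / x) := by
    rw [div_mul_eq_mul_div, div_lt_iff₀ hp, hlog]
    nlinarith [mul_le_mul_of_nonneg_right (by linarith [neg_abs_le (p - 2)] : 2 - |p - 2| ≤ p)
      hℓ.le]
  have hpow : x ^ (|p - 2| / p) < 1 + 2 / x :=
    (Real.rpow_lt_iff_lt_log hx (by positivity)).2 hexp
  calc (x ^ |1 / p - 1 / 2|) ^ 2 * x < (1 + 2 / x) * x := by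
        rw [hsq]; exact mul_lt_mul_of_pos_right hpow hx
    _ = x + 2 := by field_simp

theorem exists_abs_one_sub_rpow_add_mul_eq_two {p m : ℝ} (hp : 0 < p) (hm : 0 ≤ m) :
    ∃ c : ℝ, |1 - c| ^ p + m * |c| ^ p = 2 := by
  set g : ℝ → ℝ := fun c => |1 - c| ^ p + m * |c| ^ p
  have hg : Continuous g :=
    ((continuous_const.sub continuous_id).abs.rpow_const fun _ => Or.inr hp.le).add
      (continuous_const.mul (continuous_abs.rpow_const fun _ => Or.inr hp.le))
  have hg₀ : g 0 = 1 := by simp [g, Real.zero_rpow hp.ne']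
  have hg₁ : 2 ≤ g (1 + 2 ^ (1 / p)) := by
    have h2 : |1 - (1 + (2 : ℝ) ^ (1 / p))| ^ p = 2 := by
      rw [sub_add_cancel_left, abs_neg, abs_of_pos (by positivity), ← Real.rpow_mul two_pos.le,
        one_div_mul_cancel hp.ne', Real.rpow_one]
    simp only [g, h2]
    have : 0 ≤ m * |1 + 2 ^ (1 / p)| ^ p := by positivity
    linarith
  obtain ⟨c, -, hc⟩ := intermediate_value_Icc (by positivity) hg.continuousOn
    (show (2 : ℝ) ∈ Set.Icc (g 0) (g (1 + 2 ^ (1 / p))) from ⟨by rw [hg₀]; norm_num, hg₁⟩)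
  exact ⟨c, hc⟩

section Simplex

variable {n : ℕ} {p : ℝ}

theorem sum_abs_single_sub_single_rpow (hp : 0 < p) {i j : Fin n} (hij : i ≠ j) :
    ∑ k, |(Pi.single i 1 - Pi.single j 1 : Fin n → ℝ) k| ^ p = 2 := by
  classical
  have hterm : ∀ k, |(Pi.single i 1 - Pi.single j 1 : Fin n → ℝ) k| ^ p =
      (Pi.single i 1 + Pi.single j 1 : Fin n → ℝ) k := by
    intro k
    by_cases hki : k = i <;> by_cases hkj : k = j <;>
      simp_all [Real.zero_rpow hp.ne']
  simp only [hterm, Pi.add_apply, sum_add_distrib, sum_pi_single', mem_univ, if_true]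
  norm_num

theorem sum_abs_single_sub_const_rpow (c : ℝ) (i : Fin n) :
    ∑ k, |(Pi.single i 1 - fun _ => c : Fin n → ℝ) k| ^ p = |1 - c| ^ p + (n - 1) * |c| ^ p := by
  classical
  have hterm : ∀ k, |(Pi.single i 1 - fun _ => c : Fin n → ℝ) k| ^ p =
      |c| ^ p + (Pi.single i (|1 - c| ^ p - |c| ^ p) : Fin n → ℝ) k := by
    intro k
    by_cases hki : k = i <;> simp [hki, abs_sub_comm]
  simp only [hterm, sum_add_distrib, sum_pi_single', mem_univ, if_true, sum_const, card_univ,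
    Fintype.card_fin, nsmul_eq_mul]
  ring

theorem exists_isEquilateral_ncard_eq (hn : 1 ≤ n) (hp : 0 < p) :
    ∃ S : Set (Fin n → ℝ), S.Finite ∧ S.ncard = n + 1 ∧ IsEquilateral p S := by
  obtain ⟨c, hc⟩ := exists_abs_one_sub_rpow_add_mul_eq_two hp (sub_nonneg.2 (Nat.one_le_cast.2 hn))
  let f : Option (Fin n) → Fin n → ℝ := fun o => o.elim (fun _ => c) (fun i => Pi.single i 1)
  have hf : ∀ o o', o ≠ o' → ∑ k, |(f o - f o') k| ^ p = 2 := by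
    rintro (_ | i) (_ | j) h
    · exact absurd rfl h
    · rw [← neg_sub]
      simp_rw [Pi.neg_apply, abs_neg]
      exact (sum_abs_single_sub_const_rpow c j).trans hc
    · exact (sum_abs_single_sub_const_rpow c i).trans hc
    · exact sum_abs_single_sub_single_rpow hp (Option.some_injective _ |>.ne_iff.1 h)
  have hinj : f.Injective := fun o o' h => by
    by_contra hne
    simpa [h, Real.zero_rpow hp.ne'] using hf o o' hne
  refine ⟨Set.range f, Set.finite_range f, ?_, 2 ^ (1 / p), by positivity, ?_⟩
  · rw [Set.ncard_range_of_injective hinj]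
    simp
  · rintro _ ⟨o, rfl⟩ _ ⟨o', rfl⟩ hne
    rw [pnorm, hf o o' (ne_of_apply_ne f hne)]

end Simplex

theorem finite_and_ncard_le_of_forall_finset_card_ne {α : Type*} {s : Set α} {m : ℕ}
    (h : ∀ t : Finset α, ↑t ⊆ s → #t ≠ m + 1) : s.Finite ∧ s.ncard ≤ m := by
  have hs : s.Finite := by
    by_contra hinf
    obtain ⟨t, hts, ht⟩ := Set.Infinite.exists_subset_card_eq hinf (m + 1)
    exact h t hts ht
  refine ⟨hs, not_lt.1 fun hlt => ?_⟩
  obtain ⟨t, hts, ht⟩ := exists_subset_card_eq (s := hs.toFinset) (n := m + 1)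
    (by rwa [← Set.ncard_eq_toFinset_card s hs])
  exact h t (by simpa using hts) ht

theorem card_ne_of_isEquilateral {n : ℕ} (hn : 0 < n) {p : ℝ} (hp : 0 < p)
    (hsmall : ((n : ℝ) ^ |1 / p - 1 / 2|) ^ 2 * n < n + 2) {S : Set (Fin n → ℝ)}
    (hS : IsEquilateral p S) (T : Finset (Fin n → ℝ)) (hTS : ↑T ⊆ S) : #T ≠ n + 2 := by
  intro hT
  obtain ⟨lam, hlam, hdist⟩ := hS
  obtain ⟨c, hc, hcomp⟩ := exists_mul_pnorm_le_pnorm_two hn hp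
  set K := (n : ℝ) ^ |1 / p - 1 / 2|
  have hsq : ∀ x ∈ T, ∀ y ∈ T, x ≠ y →
      (c * lam) ^ 2 ≤ pnorm 2 (x - y) ^ 2 ∧ pnorm 2 (x - y) ^ 2 ≤ (K * (c * lam)) ^ 2 := by
    intro x hx y hy hxy
    obtain ⟨hlo, hhi⟩ := hcomp (x - y)
    rw [hdist x (hTS hx) y (hTS hy) hxy] at hlo hhi
    exact ⟨pow_le_pow_left₀ (by positivity) hlo 2, pow_le_pow_left₀ (pnorm_nonneg 2 _) hhi 2⟩
  have hgeom := mul_finrank_add_two_le_mul_finrank (E := EuclideanSpace ℝ (Fin n))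
    (T := T.map ⟨WithLp.toLp 2, WithLp.toLp_injective 2⟩) (a := (c * lam) ^ 2)
    (b := (K * (c * lam)) ^ 2) (by simp [hT]) (by
      simp only [mem_map, Function.Embedding.coeFn_mk]
      rintro _ ⟨x, hx, rfl⟩ _ ⟨y, hy, rfl⟩ hxy
      rw [← WithLp.toLp_sub, norm_toLp_two]
      exact hsq x hx y hy (ne_of_apply_ne _ hxy))
  rw [finrank_euclideanSpace_fin] at hgeom
  have hpos : 0 < (c * lam) ^ 2 := by positivity
  nlinarith [mul_lt_mul_of_pos_left hsmall hpos]

theorem stmt6 (n : ℕ) (hn : 1 ≤ n) (p : ℝ) (hp : 1 ≤ p)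
    (h : |p - 2| < 2 * Real.log (1 + 2 / (n : ℝ)) / Real.log ((n : ℝ) + 2)) :
    (∃ S : Set (Fin n → ℝ), S.Finite ∧ S.ncard = n + 1 ∧ IsEquilateral p S) ∧
    (∀ S : Set (Fin n → ℝ), IsEquilateral p S → S.Finite ∧ S.ncard ≤ n + 1) := by
  have hp₀ : 0 < p := by linarith
  have hsmall := rpow_abs_sq_mul_lt_add_two (Nat.cast_pos.2 hn) hp₀ h
  exact ⟨exists_isEquilateral_ncard_eq hn hp₀, fun S hS =>
    finite_and_ncard_le_of_forall_finset_card_ne (card_ne_of_isEquilateral hn hp₀ hsmall hS)⟩
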